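/- arXiv:2604.01233 — 3 statements merged into one kernel-verified Lean document; each statement's English description precedes it below -/
import Mathlib

section
/- Let δ = −V·Δ₀, δ* = ⌈δ⌉ − 1, and for K ∈ ℤ let χ(K) = (V·K + δ*) mod U ∈ {0, 1, …, U−1}. Then an integer K is skipped (i.e., K does not belong to the image of A) if and only if χ(K) ∈ {0, 1, …, κ−1}. -/
/-!
`A j = K` means `V K ≤ V Δ₀ + j U < V (K + 1)`, i.e. that the multiple `j U` lies in the
integer window `(m, m + V]` with `m = V K + δ*` (the ceiling turns the real bounds into integer
ones). Such a multiple exists iff the first multiple of `U` above `m`, namely `m - m mod U + U`,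
lies in the window, i.e. iff `m mod U ≥ U - V = κ`.
-/

theorem Int.exists_mul_mem_Ioc_iff_sub_le_emod {U : ℤ} (hU : 0 < U) (V m : ℤ) :
    (∃ j : ℤ, j * U ∈ Set.Ioc m (m + V)) ↔ U - V ≤ m % U := by
  have hdiv : m % U + U * (m / U) = m := Int.emod_add_mul_ediv m U
  constructor
  · rintro ⟨j, hmj, hjV⟩
    have hj : m / U + 1 ≤ j := Int.ediv_lt_of_lt_mul hU hmj
    have : (m / U + 1) * U ≤ j * U := mul_le_mul_of_nonneg_right hj hU.le
    linarith
  · intro h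
    exact ⟨m / U + 1, Int.lt_ediv_add_one_mul_self m hU, by linarith⟩

theorem Int.cast_lt_add_iff_le_add_ceil_sub_one (N n : ℤ) (δ : ℝ) :
    (N : ℝ) < n + δ ↔ N ≤ n + (⌈δ⌉ - 1) := by
  rw [← sub_lt_iff_lt_add', ← Int.cast_sub, ← Int.lt_ceil]
  omega

theorem floor_add_mul_div_eq_iff {V : ℤ} (hV : 0 < V) (Δ₀ : ℝ) (U j K : ℤ) :
    ⌊Δ₀ + j * ((U : ℝ) / V)⌋ = K ↔
      j * U ∈ Set.Ioc (V * K + (⌈-(V : ℝ) * Δ₀⌉ - 1))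
        (V * K + (⌈-(V : ℝ) * Δ₀⌉ - 1) + V) := by
  have hVR : (0 : ℝ) < V := by exact_mod_cast hV
  have hlow : (K : ℝ) ≤ Δ₀ + j * ((U : ℝ) / V) ↔
      ¬ ((j * U : ℤ) : ℝ) < (V * K : ℤ) + -(V : ℝ) * Δ₀ := by
    rw [not_lt, ← mul_le_mul_iff_of_pos_left hVR]
    push_cast
    constructor <;> intro h <;> field_simp at h ⊢ <;> linarith
  have hhigh : Δ₀ + j * ((U : ℝ) / V) < K + 1 ↔
      ((j * U : ℤ) : ℝ) < (V * K + V : ℤ) + -(V : ℝ) * Δ₀ := by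
    rw [← mul_lt_mul_iff_of_pos_left hVR]
    push_cast
    constructor <;> intro h <;> field_simp at h ⊢ <;> linarith
  rw [Int.floor_eq_iff, hlow, hhigh, Int.cast_lt_add_iff_le_add_ceil_sub_one,
    Int.cast_lt_add_iff_le_add_ceil_sub_one, Set.mem_Ioc]
  omega

theorem stmt15_general (Δ₀ : ℝ) (U V : ℤ) (hV : 0 < V) (hVU : V < U)
    (κ : ℤ) (hκ : κ = U - V)
    (A : ℤ → ℤ) (hA : ∀ j : ℤ, A j = ⌊Δ₀ + (j : ℝ) * ((U : ℝ) / (V : ℝ))⌋)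
    (δstar : ℤ) (hδstar : δstar = ⌈-(V : ℝ) * Δ₀⌉ - 1)
    (χ : ℤ → ℤ) (hχ : ∀ K : ℤ, χ K = (V * K + δstar) % U) :
    ∀ K : ℤ, K ∉ Set.range A ↔ (0 ≤ χ K ∧ χ K < κ) := by
  intro K
  have hU : 0 < U := hV.trans hVU
  have hrange : K ∈ Set.range A ↔ U - V ≤ χ K := by
    simp only [Set.mem_range, hA, floor_add_mul_div_eq_iff hV, ← hδstar, hχ]
    exact Int.exists_mul_mem_Ioc_iff_sub_le_emod hU _ _
  have hχ_nonneg : 0 ≤ χ K := hχ K ▸ Int.emod_nonneg _ hU.ne'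
  rw [hrange, hκ]
  omega

/-- Skip-day (chad) index test: with `δ = -V·Δ₀`, `δ* = ⌈δ⌉ - 1`, and
`χ(K) = (V·K + δ*) mod U`, an integer `K` is skipped (not in the image of `A`)
iff `χ(K) ∈ {0,…,κ-1}` where `κ = U - V`. -/
theorem stmt15 (Δ₀ : ℝ) (U V : ℤ) (hV : 0 < V) (hVU : V < U) (hU2V : U < 2 * V)
    (κ : ℤ) (hκ : κ = U - V)
    (A : ℤ → ℤ) (hA : ∀ j : ℤ, A j = ⌊Δ₀ + (j : ℝ) * ((U : ℝ) / (V : ℝ))⌋)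
    (δstar : ℤ) (hδstar : δstar = ⌈-(V : ℝ) * Δ₀⌉ - 1)
    (χ : ℤ → ℤ) (hχ : ∀ K : ℤ, χ K = (V * K + δstar) % U) :
    ∀ K : ℤ, K ∉ Set.range A ↔ (0 ≤ χ K ∧ χ K < κ) :=
  stmt15_general Δ₀ U V hV hVU κ hκ A hA δstar hδstar χ hχ
end

section
/- For K ∈ ℤ define J(K) = ⌈V·(K + 1 − Δ₀)/U⌉ − 1. Then: if K belongs to the image of A, one has A(J(K)) = K; and if K is skipped, one has A(J(K)) = K − 1. -/
/-!
`J` is the upper adjoint of `A`: `j ≤ J K ↔ A j ≤ K`, so `J K` is the last index with `A (J K) ≤ K`,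
and then `K < A (J K + 1)`. A label in the image of `A` is reached at or before `J K`, hence
`A (J K) = K`. Since the step `U / V` is below `2`, `A` never jumps by more than `2`, so a skipped
`K` forces `A (J K) = K - 1`.
-/

namespace GaloisConnection

variable {f g : ℤ → ℤ}

theorem lt_l_u_add_one (gc : GaloisConnection f g) (K : ℤ) : K < f (g K + 1) :=
  lt_of_not_ge fun h => (gc.le_iff_le.mp h).not_gt (Int.lt_succ _)

theorem l_u_eq_sub_one_of_notMem_range (gc : GaloisConnection f g)
    (hstep : ∀ j, f (j + 1) ≤ f j + 2) {K : ℤ} (hK : K ∉ Set.range f) : f (g K) = K - 1 := by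
  have hne : f (g K) ≠ K := fun h => hK ⟨g K, h⟩
  have := gc.l_u_le K
  have := gc.lt_l_u_add_one K
  have := hstep (g K)
  omega

end GaloisConnection

section FloorAffine

variable (Δ q : ℝ)

theorem gc_floor_add_mul_ceil_sub_div (hq : 0 < q) :
    GaloisConnection (fun j : ℤ => ⌊Δ + j * q⌋) (fun K : ℤ => ⌈(K + 1 - Δ) / q⌉ - 1) := by
  intro j K
  calc ⌊Δ + j * q⌋ ≤ K ↔ Δ + j * q < K + 1 := by rw [← Int.lt_add_one_iff, Int.floor_lt]; push_cast; rfl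
    _ ↔ (j : ℝ) < (K + 1 - Δ) / q := by rw [lt_div_iff₀ hq]; constructor <;> intro h <;> linarith
    _ ↔ j ≤ ⌈(K + 1 - Δ) / q⌉ - 1 := by rw [← Int.lt_ceil]; omega

theorem floor_add_mul_succ_le {n : ℤ} (hq : q ≤ n) (j : ℤ) :
    ⌊Δ + (j + 1 : ℤ) * q⌋ ≤ ⌊Δ + j * q⌋ + n := by
  rw [← Int.floor_add_intCast]
  exact Int.floor_le_floor (by push_cast; linarith)

end FloorAffine

/-- Inverse map from labels to civil days: with `J(K) = ⌈V·(K+1-Δ₀)/U⌉ - 1`,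
if the label `K` occurs (is in the image of `A`) then `A(J(K)) = K`,
and if `K` is skipped then `A(J(K)) = K - 1`. -/
theorem stmt16 (Δ₀ : ℝ) (U V : ℤ) (hV : 0 < V) (hVU : V < U) (hU2V : U < 2 * V)
    (A : ℤ → ℤ) (hA : ∀ j : ℤ, A j = ⌊Δ₀ + (j : ℝ) * ((U : ℝ) / (V : ℝ))⌋)
    (J : ℤ → ℤ)
    (hJ : ∀ K : ℤ, J K = ⌈(V : ℝ) * ((K : ℝ) + 1 - Δ₀) / (U : ℝ)⌉ - 1) :
    ∀ K : ℤ,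
      (K ∈ Set.range A → A (J K) = K) ∧
      (K ∉ Set.range A → A (J K) = K - 1) := by
  have hV' : (0 : ℝ) < V := by exact_mod_cast hV
  have hq : (0 : ℝ) < U / V := div_pos (by exact_mod_cast hV.trans hVU) hV'
  have hq2 : (U : ℝ) / V ≤ (2 : ℤ) := by
    rw [div_le_iff₀ hV']; exact_mod_cast hU2V.le
  have hA' : A = fun j : ℤ => ⌊Δ₀ + j * (U / V : ℝ)⌋ := funext hA
  have hJ' : J = fun K : ℤ => ⌈(K + 1 - Δ₀) / (U / V : ℝ)⌉ - 1 := by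
    funext K; rw [hJ, div_div_eq_mul_div, mul_comm]
  have gc : GaloisConnection A J := hA' ▸ hJ' ▸ gc_floor_add_mul_ceil_sub_div Δ₀ _ hq
  intro K
  refine ⟨?_, gc.l_u_eq_sub_one_of_notMem_range ?_⟩
  · rintro ⟨j, rfl⟩
    exact gc.l_u_l_eq_l j
  · intro j
    simpa only [hA'] using floor_add_mul_succ_le Δ₀ _ hq2 j
end

section
/- For every integer L ≥ 1 and every K ∈ ℤ, the number of skipped integers among {K, K+1, …, K+L−1} equals either ⌊L·κ/U⌋ or ⌈L·κ/U⌉. In particular, if 30·κ < U, then every block of 30 consecutive integers contains at most one skipped integer; consequently, when a month is linearized by the 30 labels 30n, 30n+1, …, 30n+29, the month length is always 30 civil days (no skip) or 29 civil days (one skip). -/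
/-!
The labels hit by `A` in `[K, M)` are the values `A j` for `j` in an interval of integers
`[⌈(K - Δ₀)/r⌉, ⌈(M - Δ₀)/r⌉)`, where `r = U/V`; since `r ≥ 1`, `A` is injective, so a block of
`L` labels contains `L - (⌈x + L/r⌉ - ⌈x⌉) = ⌈x⌉ - ⌈x - t⌉` skipped labels, with `x = (K - Δ₀)/r`
and `t = L (1 - 1/r) = L κ / U`. A difference `⌈x⌉ - ⌈x - t⌉` is always `⌊t⌋` or `⌈t⌉`.
-/

theorem Int.ceil_sub_ceil_sub_eq_floor_or_ceil {R : Type*} [CommRing R] [LinearOrder R]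
    [IsStrictOrderedRing R] [FloorRing R] (x t : R) :
    ⌈x⌉ - ⌈x - t⌉ = ⌊t⌋ ∨ ⌈x⌉ - ⌈x - t⌉ = ⌈t⌉ := by
  have lower : ⌈x - t⌉ + ⌊t⌋ ≤ ⌈x⌉ := by
    rw [← Int.ceil_add_intCast]
    exact Int.ceil_le_ceil (by linarith [Int.floor_le t])
  have upper : ⌈x⌉ ≤ ⌈x - t⌉ + ⌈t⌉ := by
    rw [← Int.ceil_add_intCast]
    exact Int.ceil_le_ceil (by linarith [Int.le_ceil t])
  have := Int.ceil_le_floor_add_one t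
  omega

theorem ncard_setOf_Ico_and_add_ncard_setOf_Ico_and_not (P : ℤ → Prop) (K M : ℤ) :
    {m : ℤ | K ≤ m ∧ m < M ∧ P m}.ncard + {m : ℤ | K ≤ m ∧ m < M ∧ ¬P m}.ncard
      = (M - K).toNat := by
  classical
  have hP : {m : ℤ | K ≤ m ∧ m < M ∧ P m} = ↑((Finset.Ico K M).filter P) := by
    ext m; simp [and_assoc]
  have hnP : {m : ℤ | K ≤ m ∧ m < M ∧ ¬P m} = ↑((Finset.Ico K M).filter (¬P ·)) := by
    ext m; simp [and_assoc]
  rw [hP, hnP, Set.ncard_coe_finset, Set.ncard_coe_finset,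
    Finset.card_filter_add_card_filter_not, Int.card_Ico]

noncomputable def shiftedBeattySeq {𝕜 : Type*} [Field 𝕜] [LinearOrder 𝕜] [FloorRing 𝕜]
    (Δ r : 𝕜) (j : ℤ) : ℤ :=
  ⌊Δ + j * r⌋

namespace shiftedBeattySeq

variable {𝕜 : Type*} [Field 𝕜] [LinearOrder 𝕜] [IsStrictOrderedRing 𝕜] [FloorRing 𝕜] {Δ r : 𝕜}

theorem le_iff (hr : 0 < r) (K j : ℤ) : K ≤ shiftedBeattySeq Δ r j ↔ ⌈(K - Δ) / r⌉ ≤ j := by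
  rw [shiftedBeattySeq, Int.le_floor, Int.ceil_le, div_le_iff₀ hr]
  constructor <;> intro <;> linarith

theorem lt_iff (hr : 0 < r) (M j : ℤ) : shiftedBeattySeq Δ r j < M ↔ j < ⌈(M - Δ) / r⌉ := by
  simpa only [not_le] using (le_iff hr M j).not

theorem strictMono (hr : 1 ≤ r) : StrictMono (shiftedBeattySeq Δ r) := by
  refine strictMono_int_of_lt_succ fun j => ?_
  calc shiftedBeattySeq Δ r j < ⌊Δ + j * r⌋ + 1 := lt_add_one _
    _ = ⌊Δ + j * r + 1⌋ := (Int.floor_add_one _).symm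
    _ ≤ shiftedBeattySeq Δ r (j + 1) :=
        Int.floor_le_floor (by push_cast; linarith)

theorem image_Ico_ceil (hr : 0 < r) (K M : ℤ) :
    shiftedBeattySeq Δ r '' Set.Ico ⌈(K - Δ) / r⌉ ⌈(M - Δ) / r⌉
      = {m : ℤ | K ≤ m ∧ m < M ∧ m ∈ Set.range (shiftedBeattySeq Δ r)} := by
  ext m
  constructor
  · rintro ⟨j, ⟨hKj, hjM⟩, rfl⟩
    exact ⟨(le_iff hr K j).2 hKj, (lt_iff hr M j).2 hjM, j, rfl⟩
  · rintro ⟨hK, hM, j, rfl⟩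
    exact ⟨j, ⟨(le_iff hr K j).1 hK, (lt_iff hr M j).1 hM⟩, rfl⟩

theorem ncard_hits (hr : 1 ≤ r) (K M : ℤ) :
    {m : ℤ | K ≤ m ∧ m < M ∧ m ∈ Set.range (shiftedBeattySeq Δ r)}.ncard
      = (⌈(M - Δ) / r⌉ - ⌈(K - Δ) / r⌉).toNat := by
  rw [← image_Ico_ceil (by linarith) K M,
    Set.ncard_image_of_injective _ (strictMono hr).injective, ← Finset.coe_Ico,
    Set.ncard_coe_finset, Int.card_Ico]

theorem ncard_skipped_eq_floor_or_ceil (hr : 1 ≤ r) (L : ℕ) (K : ℤ) :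
    ({m : ℤ | K ≤ m ∧ m < K + L ∧ m ∉ Set.range (shiftedBeattySeq Δ r)}.ncard : ℤ)
        = ⌊L * (1 - r⁻¹)⌋ ∨
      ({m : ℤ | K ≤ m ∧ m < K + L ∧ m ∉ Set.range (shiftedBeattySeq Δ r)}.ncard : ℤ)
        = ⌈L * (1 - r⁻¹)⌉ := by
  have hr₀ : 0 < r := by linarith
  have hsplit := ncard_setOf_Ico_and_add_ncard_setOf_Ico_and_not
    (· ∈ Set.range (shiftedBeattySeq Δ r)) K (K + L)
  have hhit := ncard_hits (Δ := Δ) hr K (K + L)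
  have hshift : ⌈((K + L : ℤ) - Δ) / r⌉ = ⌈(K - Δ) / r - L * (1 - r⁻¹)⌉ + L := by
    rw [← Int.ceil_add_intCast]
    congr 1
    field_simp
    push_cast
    ring
  have hmono : ⌈(K - Δ) / r⌉ ≤ ⌈((K + L : ℤ) - Δ) / r⌉ :=
    Int.ceil_le_ceil (by gcongr; linarith [L.cast_nonneg (α := 𝕜)])
  rcases Int.ceil_sub_ceil_sub_eq_floor_or_ceil ((K - Δ) / r) (L * (1 - r⁻¹)) with h | h
  · left; omega
  · right; omega

theorem ncard_skipped_le_one (hr : 1 ≤ r) {L : ℕ} (hL : L * (1 - r⁻¹) ≤ 1) (K : ℤ) :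
    {m : ℤ | K ≤ m ∧ m < K + L ∧ m ∉ Set.range (shiftedBeattySeq Δ r)}.ncard ≤ 1 := by
  have hceil : ⌈L * (1 - r⁻¹)⌉ ≤ 1 := Int.ceil_le.2 (by exact_mod_cast hL)
  have hfloor := (Int.floor_le_ceil (L * (1 - r⁻¹))).trans hceil
  rcases ncard_skipped_eq_floor_or_ceil (Δ := Δ) hr L K with h | h <;> omega

end shiftedBeattySeq

theorem stmt17_general (Δ₀ : ℝ) (U V : ℤ) (hV : 0 < V) (hVU : V < U)
    (κ : ℤ) (hκ : κ = U - V)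
    (A : ℤ → ℤ) (hA : ∀ j : ℤ, A j = ⌊Δ₀ + (j : ℝ) * ((U : ℝ) / (V : ℝ))⌋) :
    (∀ L : ℕ, 1 ≤ L → ∀ K : ℤ,
      (({m : ℤ | K ≤ m ∧ m < K + (L : ℤ) ∧ m ∉ Set.range A}.ncard : ℤ)
          = ⌊(L : ℝ) * (κ : ℝ) / (U : ℝ)⌋ ∨
        ({m : ℤ | K ≤ m ∧ m < K + (L : ℤ) ∧ m ∉ Set.range A}.ncard : ℤ)
          = ⌈(L : ℝ) * (κ : ℝ) / (U : ℝ)⌉)) ∧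
    (30 * κ < U →
      (∀ K : ℤ, {m : ℤ | K ≤ m ∧ m < K + 30 ∧ m ∉ Set.range A}.ncard ≤ 1) ∧
      (∀ n : ℤ,
        {m : ℤ | 30 * n ≤ m ∧ m < 30 * n + 30 ∧ m ∈ Set.range A}.ncard = 30 ∨
        {m : ℤ | 30 * n ≤ m ∧ m < 30 * n + 30 ∧ m ∈ Set.range A}.ncard = 29)) := by
  obtain rfl : A = shiftedBeattySeq Δ₀ (U / V) := funext hA
  subst hκ
  have hVℝ : (0 : ℝ) < V := by exact_mod_cast hV
  have hUℝ : (0 : ℝ) < U := by exact_mod_cast hV.trans hVU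
  have hr : 1 ≤ (U : ℝ) / V := (one_le_div hVℝ).2 (by exact_mod_cast hVU.le)
  have hdensity (L : ℕ) : (L : ℝ) * (1 - ((U : ℝ) / V)⁻¹) = L * ((U - V : ℤ) : ℝ) / U := by
    field_simp
    push_cast
    ring
  refine ⟨fun L _ K => by
    simpa only [hdensity] using shiftedBeattySeq.ncard_skipped_eq_floor_or_ceil hr L K, ?_⟩
  intro h30
  have hskip (K : ℤ) := shiftedBeattySeq.ncard_skipped_le_one (Δ := Δ₀) (L := 30) hr
    (by rw [hdensity, div_le_one hUℝ]; exact_mod_cast h30.le) K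
  refine ⟨fun K => by simpa using hskip K, fun n => ?_⟩
  have hsplit := ncard_setOf_Ico_and_add_ncard_setOf_Ico_and_not
    (· ∈ Set.range (shiftedBeattySeq Δ₀ (U / V))) (30 * n) (30 * n + 30)
  have := hskip (30 * n)
  push_cast at this
  omega

/-- Skip counts in blocks: for every `L ≥ 1` and `K`, the number of skipped labels in
`{K, …, K+L-1}` equals `⌊L·κ/U⌋` or `⌈L·κ/U⌉`. In particular, if `30·κ < U` then every
block of 30 consecutive labels contains at most one skipped label, and every month of
30 labels `30n, …, 30n+29` has exactly 30 (no skip) or 29 (one skip) civil days. -/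
theorem stmt17 (Δ₀ : ℝ) (U V : ℤ) (hV : 0 < V) (hVU : V < U) (hU2V : U < 2 * V)
    (κ : ℤ) (hκ : κ = U - V)
    (A : ℤ → ℤ) (hA : ∀ j : ℤ, A j = ⌊Δ₀ + (j : ℝ) * ((U : ℝ) / (V : ℝ))⌋) :
    (∀ L : ℕ, 1 ≤ L → ∀ K : ℤ,
      (({m : ℤ | K ≤ m ∧ m < K + (L : ℤ) ∧ m ∉ Set.range A}.ncard : ℤ)
          = ⌊(L : ℝ) * (κ : ℝ) / (U : ℝ)⌋ ∨
        ({m : ℤ | K ≤ m ∧ m < K + (L : ℤ) ∧ m ∉ Set.range A}.ncard : ℤ)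
          = ⌈(L : ℝ) * (κ : ℝ) / (U : ℝ)⌉)) ∧
    (30 * κ < U →
      (∀ K : ℤ, {m : ℤ | K ≤ m ∧ m < K + 30 ∧ m ∉ Set.range A}.ncard ≤ 1) ∧
      (∀ n : ℤ,
        {m : ℤ | 30 * n ≤ m ∧ m < 30 * n + 30 ∧ m ∈ Set.range A}.ncard = 30 ∨
        {m : ℤ | 30 * n ≤ m ∧ m < 30 * n + 30 ∧ m ∈ Set.range A}.ncard = 29)) :=
  stmt17_general Δ₀ U V hV hVU κ hκ A hA
end
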